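/- For every optimal prefix-free machine U (with K = K_U): if x is a binary sequence such that the real 0.x is regular, then the effective Hausdorff dimension and the effective packing dimension of x are both 0, i.e., lim_{n→∞} K(x↾n)/n = 0. -/

import Mathlib

open scoped ENNReal

namespace Paper

/-- Prefix of length `m` of the binary sequence `x`. -/
def pre (x : ℕ → Bool) (m : ℕ) : List Bool := List.ofFn (fun i : Fin m => x i)

/-- The real number `0.x` represented by the binary sequence `x`. -/
noncomputable def binVal (x : ℕ → Bool) : ℝ :=
  ∑' i : ℕ, if x i then (2:ℝ) ^ (-((i:ℤ) + 1)) else 0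

/-- The real number `x_A = ∑_{j∈A} 2^{-(j+1)}`. -/
noncomputable def xA (A : Set ℕ) : ℝ :=
  ∑' j : ℕ, A.indicator (fun j => (2:ℝ) ^ (-((j:ℤ) + 1))) j

/-- A set (of a primcodable type) is computably enumerable. -/
def CE {α : Type} [Primcodable α] (p : Set α) : Prop :=
  Partrec fun a => Part.assert (a ∈ p) fun _ => Part.some ()

/-- A real number is left-computable if some computable increasing sequence of
rationals converges to it. -/
def LeftComputable (x : ℝ) : Prop :=
  ∃ q : ℕ → ℚ, Computable q ∧ StrictMono q ∧
    Filter.Tendsto (fun n => (q n : ℝ)) Filter.atTop (nhds x)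

/-- A sequence of reals converges computably. -/
def ConvergesComputably (a : ℕ → ℝ) : Prop :=
  ∃ L : ℝ, Filter.Tendsto a Filter.atTop (nhds L) ∧
    ∃ g : ℕ → ℕ, Computable g ∧ ∀ m n : ℕ, g n ≤ m → |a m - L| ≤ (2:ℝ) ^ (-(n:ℤ))

/-- `u_f(m)` is the number of `k` with `f k = m`. -/
noncomputable def uf (f : ℕ → ℕ) (m : ℕ) : ℕ := Nat.card {k : ℕ // f k = m}

/-- A real number is reordered computable. -/
def ReorderedComputable (x : ℝ) : Prop :=
  ∃ f : ℕ → ℕ, Computable f ∧ HasSum (fun k => (2:ℝ) ^ (-(f k : ℤ))) x ∧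
    ConvergesComputably (fun N => ∑ m ∈ Finset.range N, (uf f m : ℝ) * (2:ℝ) ^ (-(m:ℤ)))

/-- A prefix-free machine: a computable partial function on binary strings with
prefix-free domain. -/
def PFMachine (M : List Bool →. List Bool) : Prop :=
  Partrec M ∧ ∀ σ τ : List Bool, σ ∈ M.Dom → τ ∈ M.Dom → σ <+: τ → σ = τ

/-- The Kolmogorov complexity of `τ` with respect to the machine `M`. -/
noncomputable def KM (M : List Bool →. List Bool) (τ : List Bool) : ℕ∞ :=
  sInf {n : ℕ∞ | ∃ σ : List Bool, τ ∈ M σ ∧ (σ.length : ℕ∞) = n}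

/-- An optimal prefix-free machine. -/
def OptimalPF (U : List Bool →. List Bool) : Prop :=
  PFMachine U ∧ ∀ M : List Bool →. List Bool, PFMachine M →
    ∃ c : ℕ, ∀ τ : List Bool, KM U τ ≤ KM M τ + (c : ℕ∞)

/-- Strongly Kurtz random with respect to the (optimal) machine `U`. -/
def StronglyKurtzRandom (U : List Bool →. List Bool) (x : ℕ → Bool) : Prop :=
  ¬ ∃ r : ℕ → ℕ, Computable r ∧ ∀ n : ℕ, KM U (pre x (r n)) ≤ ((r n - n : ℕ) : ℕ∞)

/-- A strong Kurtz test: a uniformly c.e. sequence of sets of strings, all strings of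
`S n` having the same length, with `∑_{τ ∈ S n} 2^{-|τ|} ≤ 2^{-n}`. -/
def StrongKurtzTest (S : ℕ → Set (List Bool)) : Prop :=
  CE {p : ℕ × List Bool | p.2 ∈ S p.1} ∧
  (∀ n : ℕ, ∀ σ ∈ S n, ∀ τ ∈ S n, σ.length = τ.length) ∧
  (∀ n : ℕ, ∑' τ : S n, ((2:ℝ≥0∞) ^ (τ : List Bool).length)⁻¹ ≤ ((2:ℝ≥0∞) ^ n)⁻¹)

/-- The test `S` covers the binary sequence `x` if every `S n` contains a prefix of `x`. -/
def Covers (S : ℕ → Set (List Bool)) (x : ℕ → Bool) : Prop :=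
  ∀ n : ℕ, ∃ τ ∈ S n, pre x τ.length = τ

/-- Kurtz random binary sequence. -/
def KurtzRandom (x : ℕ → Bool) : Prop :=
  ∀ S : Set (List Bool), CE S →
    (∀ σ ∈ S, ∀ τ ∈ S, σ <+: τ → σ = τ) →
    (∑' σ : S, ((2:ℝ≥0∞) ^ (σ : List Bool).length)⁻¹ = 1) →
    ∃ σ ∈ S, pre x σ.length = σ

/-- Immune set: infinite with no infinite c.e. subset. -/
def Immune (A : Set ℕ) : Prop :=
  A.Infinite ∧ ∀ W : Set ℕ, CE W → W.Infinite → ¬ W ⊆ A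

def BiImmune (A : Set ℕ) : Prop := Immune A ∧ Immune Aᶜ

def Hyperimmune (A : Set ℕ) : Prop :=
  A.Infinite ∧ ¬ ∃ f : ℕ → ℕ, Computable f ∧ ∀ n : ℕ, Nat.nth (· ∈ A) n ≤ f n

def HHImmune (A : Set ℕ) : Prop :=
  A.Infinite ∧ ¬ ∃ D : ℕ → Set ℕ, CE {p : ℕ × ℕ | p.2 ∈ D p.1} ∧
    (∀ m n : ℕ, m ≠ n → Disjoint (D m) (D n)) ∧ (∀ n : ℕ, (D n).Finite) ∧
    (∀ n : ℕ, (A ∩ D n).Nonempty)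

def StronglyHHImmune (A : Set ℕ) : Prop :=
  A.Infinite ∧ ¬ ∃ D : ℕ → Set ℕ, CE {p : ℕ × ℕ | p.2 ∈ D p.1} ∧
    (∀ m n : ℕ, m ≠ n → Disjoint (D m) (D n)) ∧
    (∀ n : ℕ, (A ∩ D n).Nonempty)

def Cohesive (A : Set ℕ) : Prop :=
  A.Infinite ∧ ¬ ∃ W : Set ℕ, CE W ∧ (A ∩ W).Infinite ∧ (A ∩ Wᶜ).Infinite

/-- The join `A ⊕ B`. -/
def join (A B : Set ℕ) : Set ℕ :=
  {m : ℕ | ∃ n : ℕ, (m = 2 * n ∧ n ∈ A) ∨ (m = 2 * n + 1 ∧ n ∈ B)}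

/-- Strongly left-computable real. -/
def StronglyLC (x : ℝ) : Prop := ∃ A : Set ℕ, CE A ∧ xA A = x

/-- Regular real: a sum of finitely many strongly left-computable reals. -/
def RegularReal (x : ℝ) : Prop :=
  ∃ (n : ℕ) (y : Fin n → ℝ), (∀ i, StronglyLC (y i)) ∧ ∑ i, y i = x

/-- Effective packing dimension with respect to `U`. -/
noncomputable def eDimSup (U : List Bool →. List Bool) (x : ℕ → Bool) : ℝ≥0∞ :=
  Filter.limsup (fun n : ℕ => (KM U (pre x n) : ℝ≥0∞) / (n : ℝ≥0∞)) Filter.atTop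

/-- Effective Hausdorff dimension with respect to `U`. -/
noncomputable def eDimInf (U : List Bool →. List Bool) (x : ℕ → Bool) : ℝ≥0∞ :=
  Filter.liminf (fun n : ℕ => (KM U (pre x n) : ℝ≥0∞) / (n : ℝ≥0∞)) Filter.atTop







/-- little-endian value of a bit list -/
def bval (l : List Bool) : ℕ := l.foldr (fun b s => 2 * s + cond b 1 0) 0

@[simp] lemma bval_nil : bval [] = 0 := rfl
@[simp] lemma bval_cons (b : Bool) (l : List Bool) :
    bval (b :: l) = 2 * bval l + cond b 1 0 := rfl

lemma bval_bits : ∀ (j v : ℕ), v < 2 ^ j →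
    bval ((List.range j).map v.testBit) = v := by
  intro j
  induction j with
  | zero => intro v hv; interval_cases v; rfl
  | succ j ih =>
    intro v hv
    rw [List.range_succ_eq_map, List.map_cons, List.map_map, bval_cons]
    have h1 : (List.map (v.testBit ∘ Nat.succ) (List.range j)) =
        (List.range j).map (v / 2).testBit := by
      apply List.map_congr_left
      intro i _
      simp [Function.comp, Nat.testBit_succ]
    rw [h1, ih (v / 2) (by omega)]
    have := Nat.div_add_mod v 2
    rcases Nat.mod_two_eq_zero_or_one v with h | h <;>
      simp [Nat.testBit_zero, h] <;> omega

def J (σ : List Bool) : ℕ := σ.findIdx (fun b => !b)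

def W (σ : List Bool) : List Bool :=
  (List.range (J σ)).map fun i => σ.getD (J σ + 1 + i) false

def wf (σ : List Bool) : Prop := σ.length = 2 * J σ + 1

instance : DecidablePred wf := fun σ => by unfold wf; infer_instance

def enc (v : ℕ) : List Bool :=
  List.replicate v.size true ++ false :: (List.range v.size).map v.testBit

lemma J_replicate (j : ℕ) (l : List Bool) :
    J (List.replicate j true ++ false :: l) = j := by
  induction j with
  | zero => simp [J, List.findIdx_cons]
  | succ j ih =>
    rw [List.replicate_succ, List.cons_append]
    simpa [J, List.findIdx_cons] using ih

lemma enc_len (v : ℕ) : (enc v).length = 2 * v.size + 1 := by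
  simp [enc]; omega

lemma J_enc (v : ℕ) : J (enc v) = v.size := J_replicate _ _

lemma wf_enc (v : ℕ) : wf (enc v) := by
  unfold wf; rw [enc_len, J_enc]

lemma W_enc (v : ℕ) : W (enc v) = (List.range v.size).map v.testBit := by
  unfold W
  rw [J_enc]
  apply List.map_congr_left
  intro i hi
  rw [List.mem_range] at hi
  rw [List.getD_eq_getElem?_getD, enc,
    List.getElem?_append_right (by simp; omega)]
  simp only [List.length_replicate]
  have h2 : v.size + 1 + i - v.size = i + 1 := by omega
  rw [h2]
  simp [List.getElem?_cons_succ, List.getElem?_map, List.getElem?_range hi]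

lemma bval_W_enc (v : ℕ) : bval (W (enc v)) = v := by
  rw [W_enc, bval_bits _ _ (Nat.lt_size_self v)]

/-- the wrapped machine -/
def Mach (G : ℕ →. List Bool) : List Bool →. List Bool :=
  fun σ => (Part.ofOption (if wf σ then some (bval (W σ)) else none)).bind G

lemma Mach_enc (G : ℕ →. List Bool) (v : ℕ) : Mach G (enc v) = G v := by
  unfold Mach
  rw [if_pos (wf_enc v)]
  simp [bval_W_enc]
  exact Part.bind_some v G

lemma Mach_dom_wf {G : ℕ →. List Bool} {σ : List Bool} (h : σ ∈ (Mach G).Dom) : wf σ := by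
  by_contra hwf
  have he : Mach G σ = Part.none := by
    unfold Mach; rw [if_neg hwf]; simp; exact Part.bind_none G
  have h2 : (Mach G σ).Dom := h
  rw [he] at h2
  simpa using h2

lemma wf_prefix {σ τ : List Bool} (h1 : wf σ) (h2 : wf τ) (h : σ <+: τ) : σ = τ := by
  obtain ⟨r, rfl⟩ := h
  have hJ : J σ < σ.length := by unfold wf at h1; omega
  have : J (σ ++ r) = J σ := by
    unfold J at hJ ⊢
    rw [List.findIdx_append, if_pos hJ]
  unfold wf at h1 h2
  rw [this] at h2
  have : r.length = 0 := by simp at h2; omega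
  simp [List.length_eq_zero_iff] at this
  simp [this]

lemma primrec_J : Primrec J := by
  have : Primrec₂ (fun (_ : List Bool) (b : Bool) => !b) :=
    (Primrec.dom_bool _).comp (Primrec.snd)
  exact Primrec.list_findIdx Primrec.id this

lemma primrec_W : Primrec W := by
  apply Primrec.list_map (Primrec.list_range.comp primrec_J)
  exact (Primrec.list_getD false).comp₂ (Primrec.fst)
    ((Primrec.nat_add.comp₂ ((Primrec.nat_add.comp₂ (primrec_J.comp₂ Primrec.fst)
      (Primrec.const 1))) Primrec.snd))

lemma primrec_bval : Primrec bval := by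
  have h : Primrec₂ (fun (_ : List Bool) (p : Bool × ℕ) => 2 * p.2 + cond p.1 1 0) := by
    apply Primrec.nat_add.comp₂
    · exact Primrec.nat_mul.comp₂ (Primrec₂.const 2) ((Primrec.snd.comp Primrec.snd).to₂)
    · exact (Primrec.cond (Primrec.fst.comp Primrec.snd) (Primrec.const 1) (Primrec.const 0)).to₂
  exact Primrec.list_foldr Primrec.id (Primrec.const 0) h

lemma partrec_Mach {G : ℕ →. List Bool} (hG : Partrec G) : Partrec (Mach G) := by
  apply Partrec.bind
  · apply Computable.ofOption
    apply Primrec.to_comp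
    exact Primrec.ite (Primrec.eq.comp Primrec.list_length
      (Primrec.nat_add.comp (Primrec.nat_mul.comp (Primrec.const 2) primrec_J) (Primrec.const 1)))
      (Primrec.option_some.comp (primrec_bval.comp primrec_W)) (Primrec.const none)
  · exact hG.comp (Computable.snd)

lemma pf_Mach {G : ℕ →. List Bool} (hG : Partrec G) : PFMachine (Mach G) :=
  ⟨partrec_Mach hG, fun _ _ h1 h2 hp => wf_prefix (Mach_dom_wf h1) (Mach_dom_wf h2) hp⟩

lemma KM_Mach_le {G : ℕ →. List Bool} {v : ℕ} {τ : List Bool} (h : τ ∈ G v) :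
    KM (Mach G) τ ≤ ((2 * v.size + 1 : ℕ) : ℕ∞) := by
  apply sInf_le
  exact ⟨enc v, by rw [Mach_enc]; exact h, by rw [enc_len]⟩





open Nat.Partrec (Code)
open Nat.Partrec.Code

/-- approximation of the c.e. set with code number `e` at stage `s` -/
def apx (e s a : ℕ) : Bool := (evaln s (Denumerable.ofNat Code e) a).isSome

def GoodCode (A : Set ℕ) (e : ℕ) : Prop := ∀ a, a ∈ A ↔ ∃ s, apx e s a = true

lemma apx_mono {e s s' a : ℕ} (h : s ≤ s') (ha : apx e s a = true) : apx e s' a = true := by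
  unfold apx at *
  rw [Option.isSome_iff_exists] at *
  obtain ⟨x, hx⟩ := ha
  exact ⟨x, evaln_mono h hx⟩

lemma exists_goodCode {A : Set ℕ} (h : CE A) : ∃ e, GoodCode A e := by
  unfold CE Partrec at h
  obtain ⟨c, hc⟩ := exists_code.1 h
  refine ⟨Encodable.encode c, fun a => ?_⟩
  have hd : (c.eval a).Dom ↔ a ∈ A := by
    rw [hc]
    simp [Part.assert]
  rw [← hd]
  constructor
  · intro hdom
    obtain ⟨x, hx⟩ := Part.dom_iff_mem.1 hdom
    obtain ⟨s, hs⟩ := evaln_complete.1 hx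
    refine ⟨s, ?_⟩
    unfold apx
    rw [Denumerable.ofNat_encode]
    rw [Option.isSome_iff_exists]
    exact ⟨x, hs⟩
  · rintro ⟨s, hs⟩
    unfold apx at hs
    rw [Denumerable.ofNat_encode, Option.isSome_iff_exists] at hs
    obtain ⟨x, hx⟩ := hs
    exact Part.dom_iff_mem.2 ⟨x, evaln_complete.2 ⟨s, hx⟩⟩

lemma primrec_apx : Primrec fun p : ℕ × ℕ × ℕ => apx p.1 p.2.1 p.2.2 := by
  have h1 : Primrec fun p : ℕ × ℕ × ℕ =>
      evaln p.2.1 (Denumerable.ofNat Code p.1) p.2.2 :=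
    primrec_evaln.comp ((((Primrec.fst.comp Primrec.snd)).pair
      ((Primrec.ofNat Code).comp Primrec.fst)).pair (Primrec.snd.comp Primrec.snd))
  exact Primrec.option_isSome.comp h1

/-- `Primrec₂` of a bounded sum -/
lemma primrec_sum_range {α : Type} [Primcodable α] {f : α → ℕ → ℕ} (hf : Primrec₂ f) :
    Primrec₂ fun (a : α) (n : ℕ) => ∑ i ∈ Finset.range n, f a i := by
  have h := Primrec.nat_rec' (f := fun p : α × ℕ => p.2) (g := fun _ => (0:ℕ))
    (h := fun p q => q.2 + f p.1 q.1) Primrec.snd (Primrec.const 0)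
    ((Primrec.nat_add.comp (Primrec.snd.comp Primrec.snd)
      (hf.comp (Primrec.fst.comp Primrec.fst) (Primrec.fst.comp Primrec.snd))).to₂)
  have he : ∀ p : α × ℕ, (Nat.rec 0 (fun n ih => ih + f p.1 n) p.2 : ℕ) =
      ∑ i ∈ Finset.range p.2, f p.1 i := by
    rintro ⟨a, n⟩
    induction n with
    | zero => simp
    | succ n ih => simpa [Finset.sum_range_succ] using ih
  exact h.of_eq he





@[simp] lemma pre_length (x : ℕ → Bool) (m : ℕ) : (pre x m).length = m := by
  simp [pre]

lemma pre_succ (x : ℕ → Bool) (n : ℕ) : pre x (n + 1) = pre x n ++ [x n] := by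
  unfold pre
  rw [List.ofFn_succ']
  simp [List.concat_eq_append]

/-- big-endian value of a bit list -/
def bigval (l : List Bool) : ℕ := l.foldl (fun s b => 2 * s + cond b 1 0) 0

@[simp] lemma bigval_nil : bigval [] = 0 := rfl

lemma bigval_append (l : List Bool) (b : Bool) :
    bigval (l ++ [b]) = 2 * bigval l + cond b 1 0 := by
  unfold bigval
  rw [List.foldl_append]
  rfl

lemma bigval_lt (l : List Bool) : bigval l < 2 ^ l.length := by
  induction l using List.reverseRecOn with
  | nil => simp
  | append_singleton l b ih =>
    rw [bigval_append]
    simp only [List.length_append, List.length_singleton]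
    cases b <;> simp <;> omega

def digits (n P : ℕ) : List Bool := (List.range n).map fun i => P.testBit (n - 1 - i)

lemma digits_bigval : ∀ (l : List Bool), digits l.length (bigval l) = l := by
  intro l
  induction l using List.reverseRecOn with
  | nil => simp [digits]
  | append_singleton l b ih =>
    rw [bigval_append]
    simp only [List.length_append, List.length_singleton]
    unfold digits
    rw [List.range_succ, List.map_append]
    congr 1
    · have hc : ∀ i ∈ List.range l.length,
          (2 * bigval l + cond b 1 0).testBit (l.length + 1 - 1 - i) =
          (bigval l).testBit (l.length - 1 - i) := by
        intro i hi
        rw [List.mem_range] at hi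
        have h1 : l.length + 1 - 1 - i = (l.length - 1 - i) + 1 := by omega
        rw [h1, Nat.testBit_succ]
        congr 1
        cases b <;> simp <;> omega
      rw [List.map_congr_left hc]
      exact ih
    · simp only [List.map_cons, List.map_nil]
      congr 1
      have : l.length + 1 - 1 - l.length = 0 := by omega
      rw [this, Nat.testBit_zero]
      cases b <;> simp <;> omega

lemma digits_pre (x : ℕ → Bool) (n : ℕ) : digits n (bigval (pre x n)) = pre x n := by
  have h := digits_bigval (pre x n)
  rwa [pre_length] at h

lemma bigval_pre_succ (x : ℕ → Bool) (n : ℕ) :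
    bigval (pre x (n + 1)) = 2 * bigval (pre x n) + cond (x n) 1 0 := by
  rw [pre_succ, bigval_append]






lemma zpow_eq (i : ℕ) : (2:ℝ) ^ (-((i:ℤ) + 1)) = ((2:ℝ) ^ (i + 1))⁻¹ := by
  rw [show (-((i:ℤ) + 1)) = -((i + 1 : ℕ) : ℤ) by push_cast; ring, zpow_neg, zpow_natCast]

lemma summable_base : Summable (fun i : ℕ => ((2:ℝ) ^ (i + 1))⁻¹) := by
  have h : ∀ i : ℕ, ((2:ℝ) ^ (i + 1))⁻¹ = (1/2 : ℝ) * (1/2)^i := by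
    intro i; rw [pow_succ, mul_inv, one_div, inv_pow]; ring
  simp_rw [h]
  exact summable_geometric_two.mul_left _

lemma base_shift_eq (n : ℕ) : ∀ i : ℕ, ((2:ℝ) ^ (i + n + 1))⁻¹ = ((2:ℝ)^(n+1))⁻¹ * (1/2)^i := by
  intro i
  rw [show i + n + 1 = (n + 1) + i by ring, pow_add]
  rw [mul_inv, one_div, inv_pow]

lemma summable_base_shift (n : ℕ) : Summable (fun i : ℕ => ((2:ℝ) ^ (i + n + 1))⁻¹) := by
  simp_rw [base_shift_eq n]
  exact summable_geometric_two.mul_left _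

lemma tsum_tail_base (n : ℕ) : ∑' i : ℕ, ((2:ℝ) ^ (i + n + 1))⁻¹ = ((2:ℝ) ^ n)⁻¹ := by
  simp_rw [base_shift_eq n]
  rw [tsum_mul_left, tsum_geometric_two]
  rw [pow_succ]
  field_simp

section dyadic

variable {g : ℕ → ℝ} (hg0 : ∀ i, 0 ≤ g i) (hg1 : ∀ i, g i ≤ ((2:ℝ) ^ (i + 1))⁻¹)

include hg0 hg1

lemma summable_dyadic : Summable g :=
  Summable.of_nonneg_of_le hg0 hg1 summable_base

/-- tail bounds -/
lemma tail_nonneg (n : ℕ) : 0 ≤ ∑' i : ℕ, g (i + n) :=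
  tsum_nonneg (fun i => hg0 _)

lemma tail_le (n : ℕ) : ∑' i : ℕ, g (i + n) ≤ ((2:ℝ) ^ n)⁻¹ := by
  rw [← tsum_tail_base n]
  exact Summable.tsum_le_tsum (fun i => hg1 _)
    (Summable.of_nonneg_of_le (fun i => hg0 _) (fun i => hg1 _) (summable_base_shift n))
    (summable_base_shift n)



lemma tsum_split (n : ℕ) : ∑' i, g i = ∑ i ∈ Finset.range n, g i + ∑' i, g (i + n) :=
  (Summable.sum_add_tsum_nat_add n (summable_dyadic hg0 hg1)).symm

end dyadic

section binval

variable (x : ℕ → Bool)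

noncomputable def fx : ℕ → ℝ := fun i => if x i then ((2:ℝ) ^ (i + 1))⁻¹ else 0

lemma fx0 : ∀ i, 0 ≤ fx x i := by
  intro i; unfold fx; split <;> positivity

lemma fx1 : ∀ i, fx x i ≤ ((2:ℝ) ^ (i + 1))⁻¹ := by
  intro i; unfold fx; split
  · exact le_rfl
  · positivity

lemma binVal_eq : binVal x = ∑' i, fx x i := by
  unfold binVal fx
  congr 1

lemma head_eq_bigval (n : ℕ) :
    ∑ i ∈ Finset.range n, fx x i = (bigval (pre x n) : ℝ) / 2 ^ n := by
  induction n with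
  | zero => simp [pre]
  | succ n ih =>
    rw [Finset.sum_range_succ, ih, bigval_pre_succ]
    unfold fx
    cases hx : x n <;> push_cast <;> simp [pow_succ] <;> field_simp <;> ring

lemma binVal_split (n : ℕ) :
    ∃ t : ℝ, binVal x = (bigval (pre x n) : ℝ) / 2 ^ n + t ∧ 0 ≤ t ∧ t ≤ ((2:ℝ) ^ n)⁻¹ ∧
      ((∃ j, n ≤ j ∧ x j = false) → t < ((2:ℝ) ^ n)⁻¹) := by
  refine ⟨∑' i, fx x (i + n), ?_, tail_nonneg (fx0 x) (fx1 x) n, tail_le (fx0 x) (fx1 x) n, ?_⟩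
  · rw [binVal_eq, tsum_split (fx0 x) (fx1 x) n, head_eq_bigval]
  · rintro ⟨j, hj, hxj⟩
    rw [← tsum_tail_base n]
    refine Summable.tsum_lt_tsum (i := j - n) (fun i => fx1 x _) ?_
      (Summable.of_nonneg_of_le (fun i => fx0 x _) (fun i => fx1 x _) (summable_base_shift n))
      (summable_base_shift n)
    have h1 : j - n + n = j := by omega
    rw [h1]
    unfold fx
    rw [hxj]
    simp
    try positivity

end binval

section xa

open Classical in
noncomputable def VA (A : Set ℕ) (n : ℕ) : ℕ :=
  ∑ a ∈ Finset.range n, if a ∈ A then 2 ^ (n - 1 - a) else 0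

open Classical in
noncomputable def FA (A : Set ℕ) : ℕ → ℝ := fun a => if a ∈ A then ((2:ℝ) ^ (a + 1))⁻¹ else 0

lemma FA0 (A : Set ℕ) : ∀ a, 0 ≤ FA A a := by
  intro a; unfold FA; split <;> positivity

lemma FA1 (A : Set ℕ) : ∀ a, FA A a ≤ ((2:ℝ) ^ (a + 1))⁻¹ := by
  intro a; unfold FA; split
  · exact le_rfl
  · positivity

lemma xA_eq (A : Set ℕ) : xA A = ∑' a, FA A a := by
  unfold xA FA
  congr 1

lemma headA_eq (A : Set ℕ) (n : ℕ) :
    ∑ a ∈ Finset.range n, FA A a = (VA A n : ℝ) / 2 ^ n := by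
  unfold VA
  rw [Nat.cast_sum, Finset.sum_div]
  apply Finset.sum_congr rfl
  intro a ha
  rw [Finset.mem_range] at ha
  unfold FA
  split
  · push_cast
    have h2 : (2:ℝ) ^ n = 2 ^ (n - 1 - a) * 2 ^ (a + 1) := by
      rw [← pow_add]; congr 1; omega
    rw [h2]
    field_simp
  · simp

lemma xA_split (A : Set ℕ) (n : ℕ) :
    ∃ t : ℝ, xA A = (VA A n : ℝ) / 2 ^ n + t ∧ 0 ≤ t ∧ t ≤ ((2:ℝ) ^ n)⁻¹ := by
  refine ⟨∑' a, FA A (a + n), ?_, tail_nonneg (FA0 A) (FA1 A) n, tail_le (FA0 A) (FA1 A) n⟩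
  rw [xA_eq, tsum_split (FA0 A) (FA1 A) n, headA_eq]

end xa

/-- Main arithmetic claim: the big-endian value of the prefix equals the sum of the
`VA`'s plus a defect at most `k`. -/
lemma claim1 (x : ℕ → Bool) (k : ℕ) (A : ℕ → Set ℕ)
    (hx : binVal x = ∑ i ∈ Finset.range k, xA (A i))
    (hcase : ∀ N, ∃ j, N ≤ j ∧ x j = false) (n : ℕ) :
    ∑ i ∈ Finset.range k, VA (A i) n ≤ bigval (pre x n) ∧
      bigval (pre x n) ≤ ∑ i ∈ Finset.range k, VA (A i) n + k := by
  obtain ⟨t, ht, ht0, _, htlt⟩ := binVal_split x n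
  have htlt := htlt (hcase n)
  -- sum the xA splits
  have h2 : ∃ T : ℝ, ∑ i ∈ Finset.range k, xA (A i) =
      (∑ i ∈ Finset.range k, VA (A i) n : ℕ) / 2 ^ n + T ∧ 0 ≤ T ∧ T ≤ k * ((2:ℝ) ^ n)⁻¹ := by
    choose tt htt h0 h1 using fun i => xA_split (A i) n
    refine ⟨∑ i ∈ Finset.range k, tt i, ?_, Finset.sum_nonneg (fun i _ => h0 i), ?_⟩
    · rw [Finset.sum_congr rfl (fun i _ => htt i), Finset.sum_add_distrib]
      push_cast
      rw [Finset.sum_div]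
    · calc ∑ i ∈ Finset.range k, tt i ≤ ∑ _i ∈ Finset.range k, ((2:ℝ) ^ n)⁻¹ :=
            Finset.sum_le_sum (fun i _ => h1 i)
        _ = k * ((2:ℝ) ^ n)⁻¹ := by simp [mul_comm]
  obtain ⟨T, hT, hT0, hTk⟩ := h2
  rw [hx, hT] at ht
  have hpow : (0:ℝ) < 2 ^ n := by positivity
  have e1 : (2:ℝ) ^ n * ((bigval (pre x n) : ℝ) / 2 ^ n) = (bigval (pre x n) : ℝ) := by
    field_simp
  have e2 : (2:ℝ) ^ n * (((∑ i ∈ Finset.range k, VA (A i) n : ℕ) : ℝ) / 2 ^ n) =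
      ((∑ i ∈ Finset.range k, VA (A i) n : ℕ) : ℝ) := by
    field_simp
  have key : (bigval (pre x n) : ℝ) + 2 ^ n * t =
      ((∑ i ∈ Finset.range k, VA (A i) n : ℕ) : ℝ) + 2 ^ n * T := by
    have h3 : (2:ℝ) ^ n * ((bigval (pre x n) : ℝ) / 2 ^ n + t) =
        2 ^ n * (((∑ i ∈ Finset.range k, VA (A i) n : ℕ) : ℝ) / 2 ^ n + T) := by rw [ht]
    rw [mul_add, mul_add, e1, e2] at h3
    exact h3
  have hu1 : 2 ^ n * t < 1 := by
    calc 2 ^ n * t < 2 ^ n * ((2:ℝ)^n)⁻¹ := by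
          exact mul_lt_mul_of_pos_left htlt hpow
      _ = 1 := by field_simp
  have hu0 : 0 ≤ 2 ^ n * t := by positivity
  have hw0 : 0 ≤ 2 ^ n * T := by positivity
  have hwk : 2 ^ n * T ≤ k := by
    calc 2 ^ n * T ≤ 2 ^ n * ((k:ℝ) * ((2:ℝ)^n)⁻¹) := by
          exact mul_le_mul_of_nonneg_left hTk (le_of_lt hpow)
      _ = k := by field_simp
  constructor
  · have : ((∑ i ∈ Finset.range k, VA (A i) n : ℕ) : ℝ) < bigval (pre x n) + 1 := by nlinarith
    exact_mod_cast Nat.lt_succ_iff.mp (by exact_mod_cast this)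
  · have : (bigval (pre x n) : ℝ) ≤ (∑ i ∈ Finset.range k, VA (A i) n : ℕ) + k := by nlinarith
    exact_mod_cast this




section G1

variable (L : List ℕ) (k : ℕ)

def aps (i s a : ℕ) : Bool := apx (L.getD i 0) s a

def cnt (s n : ℕ) : ℕ :=
  ∑ i ∈ Finset.range k, ∑ a ∈ Finset.range n, cond (aps L i s a) 1 0

def Vap (s n : ℕ) : ℕ :=
  ∑ i ∈ Finset.range k, ∑ a ∈ Finset.range n, cond (aps L i s a) (2 ^ (n - 1 - a)) 0

def out (v s : ℕ) : List Bool :=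
  digits v.unpair.1 (Vap L k s v.unpair.1 + v.unpair.2.unpair.2)

def G1 : ℕ →. List Bool := fun v =>
  (Nat.rfind (fun s => Part.some (decide (v.unpair.2.unpair.1 ≤ cnt L k s v.unpair.1)))).map
    (out L k v)

lemma primrec_aps : Primrec fun p : ℕ × ℕ × ℕ => aps L p.1 p.2.1 p.2.2 := by
  unfold aps
  exact primrec_apx.comp ((((Primrec.list_getD 0).comp (Primrec.const L)
    Primrec.fst)).pair Primrec.snd)

lemma primrec_pow2 : Primrec fun m : ℕ => 2 ^ m := by
  have h := Primrec.nat_rec' (f := fun m : ℕ => m) (g := fun _ : ℕ => (1:ℕ))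
    (h := fun _ q => 2 * q.2) Primrec.id (Primrec.const 1)
    ((Primrec.nat_mul.comp (Primrec.const 2) (Primrec.snd.comp Primrec.snd)).to₂)
  apply h.of_eq
  intro m
  induction m with
  | zero => rfl
  | succ m ih =>
    show 2 * _ = _
    rw [ih, pow_succ]
    ring

lemma primrec_testBit : Primrec₂ Nat.testBit := by
  have h : Primrec fun p : ℕ × ℕ => decide (p.1 / 2 ^ p.2 % 2 = 1) :=
    PrimrecPred.decide (Primrec.eq.comp (Primrec.nat_mod.comp
      (Primrec.nat_div.comp Primrec.fst (primrec_pow2.comp Primrec.snd)) (Primrec.const 2))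
      (Primrec.const 1))
  exact (h.of_eq (fun p => (Nat.testBit_eq_decide_div_mod_eq).symm)).to₂

lemma primrec_cnt : Primrec₂ (cnt L k) := by
  have hap : Primrec fun p : (((ℕ × ℕ) × ℕ) × ℕ) => aps L p.1.2 p.1.1.1 p.2 :=
    (primrec_aps L).comp ((Primrec.snd.comp Primrec.fst).pair
      ((Primrec.fst.comp (Primrec.fst.comp Primrec.fst)).pair Primrec.snd))
  have hin : Primrec₂ fun (b : (ℕ × ℕ) × ℕ) (a : ℕ) => (cond (aps L b.2 b.1.1 a) 1 0 : ℕ) :=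
    (Primrec.cond hap (Primrec.const 1) (Primrec.const 0)).to₂
  have hsum1 := primrec_sum_range hin
  have hin0 : Primrec fun p : (ℕ × ℕ) × ℕ =>
      ∑ a ∈ Finset.range p.1.2, (cond (aps L p.2 p.1.1 a) 1 0 : ℕ) :=
    hsum1.comp Primrec.id (Primrec.snd.comp Primrec.fst)
  have hsum2 := primrec_sum_range (hin0.to₂)
  exact (hsum2.comp Primrec.id (Primrec.const k)).to₂

lemma primrec_Vap : Primrec₂ (Vap L k) := by
  have hap : Primrec fun p : (((ℕ × ℕ) × ℕ) × ℕ) => aps L p.1.2 p.1.1.1 p.2 :=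
    (primrec_aps L).comp ((Primrec.snd.comp Primrec.fst).pair
      ((Primrec.fst.comp (Primrec.fst.comp Primrec.fst)).pair Primrec.snd))
  have hpow : Primrec fun p : (((ℕ × ℕ) × ℕ) × ℕ) => 2 ^ (p.1.1.2 - 1 - p.2) :=
    primrec_pow2.comp (Primrec.nat_sub.comp
      (Primrec.nat_sub.comp (Primrec.snd.comp (Primrec.fst.comp Primrec.fst)) (Primrec.const 1))
      Primrec.snd)
  have hin : Primrec₂ fun (b : (ℕ × ℕ) × ℕ) (a : ℕ) =>
      (cond (aps L b.2 b.1.1 a) (2 ^ (b.1.2 - 1 - a)) 0 : ℕ) :=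
    (Primrec.cond hap hpow (Primrec.const 0)).to₂
  have hsum1 := primrec_sum_range hin
  have hin0 : Primrec fun p : (ℕ × ℕ) × ℕ =>
      ∑ a ∈ Finset.range p.1.2, (cond (aps L p.2 p.1.1 a) (2 ^ (p.1.2 - 1 - a)) 0 : ℕ) :=
    hsum1.comp Primrec.id (Primrec.snd.comp Primrec.fst)
  have hsum2 := primrec_sum_range (hin0.to₂)
  exact (hsum2.comp Primrec.id (Primrec.const k)).to₂

lemma primrec_digits : Primrec₂ digits := by
  unfold digits
  have h : Primrec₂ fun (p : ℕ × ℕ) (i : ℕ) => p.2.testBit (p.1 - 1 - i) :=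
    primrec_testBit.comp (Primrec.snd.comp Primrec.fst)
      (Primrec.nat_sub.comp
        (Primrec.nat_sub.comp (Primrec.fst.comp Primrec.fst) (Primrec.const 1)) Primrec.snd) |>.to₂
  exact (Primrec.list_map (Primrec.list_range.comp Primrec.fst) h).to₂

lemma primrec_out : Primrec₂ (out L k) := by
  unfold out
  have hn : Primrec fun p : ℕ × ℕ => p.1.unpair.1 :=
    Primrec.fst.comp (Primrec.unpair.comp Primrec.fst)
  have hd : Primrec fun p : ℕ × ℕ => p.1.unpair.2.unpair.2 :=
    Primrec.snd.comp (Primrec.unpair.comp (Primrec.snd.comp (Primrec.unpair.comp Primrec.fst)))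
  have hV : Primrec fun p : ℕ × ℕ => Vap L k p.2 p.1.unpair.1 :=
    (primrec_Vap L k).comp Primrec.snd hn
  exact (primrec_digits.comp hn (Primrec.nat_add.comp hV hd)).to₂

lemma partrec_G1 : Partrec (G1 L k) := by
  unfold G1
  apply Partrec.map
  · apply Partrec.rfind
    have hpr : Primrec₂ fun (v s : ℕ) =>
        decide (v.unpair.2.unpair.1 ≤ cnt L k s v.unpair.1) :=
      Primrec.to₂ (PrimrecPred.decide (Primrec.nat_le.comp
        (Primrec.fst.comp (Primrec.unpair.comp (Primrec.snd.comp (Primrec.unpair.comp Primrec.fst))))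
        ((primrec_cnt L k).comp Primrec.snd
          (Primrec.fst.comp (Primrec.unpair.comp Primrec.fst)))))
    exact (hpr.to_comp).partrec₂
  · exact ((primrec_out L k).to_comp).comp (Computable.fst) (Computable.snd) |>.to₂

end G1




section corr

open Classical in
/-- the true count -/
noncomputable def mst (A : ℕ → Set ℕ) (k n : ℕ) : ℕ :=
  ∑ i ∈ Finset.range k, ∑ a ∈ Finset.range n, if a ∈ A i then 1 else 0

variable {L : List ℕ} {k : ℕ} {A : ℕ → Set ℕ}
  (hgood : ∀ i < k, GoodCode (A i) (L.getD i 0))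

include hgood

lemma stage_exists (n : ℕ) : ∃ s, ∀ i < k, ∀ a < n, a ∈ A i → aps L i s a = true := by
  classical
  refine ⟨(Finset.range k ×ˢ Finset.range n).sup
    (fun p => if h : ∃ s, aps L p.1 s p.2 = true then Nat.find h else 0), ?_⟩
  intro i hi a ha hA
  have hex : ∃ s, aps L i s a = true := (hgood i hi a).1 hA
  have h1 : aps L i (Nat.find hex) a = true := Nat.find_spec hex
  have h2 : (if h : ∃ s, aps L i s a = true then Nat.find h else 0) ≤
      (Finset.range k ×ˢ Finset.range n).sup
        (fun p => if h : ∃ s, aps L p.1 s p.2 = true then Nat.find h else 0) :=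
    Finset.le_sup (f := fun p : ℕ × ℕ => if h : ∃ s, aps L p.1 s p.2 = true then Nat.find h else 0)
      (b := (i, a)) (Finset.mem_product.2 ⟨Finset.mem_range.2 hi, Finset.mem_range.2 ha⟩)
  rw [dif_pos hex] at h2
  exact apx_mono h2 h1

open Classical in
lemma stage_correct {s n : ℕ} (hs : mst A k n ≤ cnt L k s n) :
    ∀ i < k, ∀ a < n, (aps L i s a = true ↔ a ∈ A i) := by
  classical
  have hle : ∀ i ∈ Finset.range k, ∀ a ∈ Finset.range n,
      (cond (aps L i s a) 1 0 : ℕ) ≤ (if a ∈ A i then 1 else 0) := by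
    intro i hi a _
    rw [Finset.mem_range] at hi
    cases h : aps L i s a
    · simp
    · have : a ∈ A i := (hgood i hi a).2 ⟨s, h⟩
      simp [this]
  have hsum_le : cnt L k s n ≤ mst A k n := by
    unfold cnt mst
    exact Finset.sum_le_sum (fun i hi => Finset.sum_le_sum (fun a ha => hle i hi a ha))
  have heq : cnt L k s n = mst A k n := le_antisymm hsum_le hs
  unfold cnt mst at heq
  have houter := (Finset.sum_eq_sum_iff_of_le
    (fun i hi => Finset.sum_le_sum (fun a ha => hle i hi a ha))).1 heq
  intro i hi a ha
  have hinner := (Finset.sum_eq_sum_iff_of_le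
    (fun a ha => hle i (Finset.mem_range.2 hi) a ha)).1
    (houter i (Finset.mem_range.2 hi))
  have hterm := hinner a (Finset.mem_range.2 ha)
  constructor
  · intro h
    exact (hgood i hi a).2 ⟨s, h⟩
  · intro h
    rw [if_pos h] at hterm
    cases hh : aps L i s a
    · rw [hh] at hterm; simp at hterm
    · rfl

open Classical in
lemma Vap_correct {s n : ℕ} (hs : mst A k n ≤ cnt L k s n) :
    Vap L k s n = ∑ i ∈ Finset.range k, VA (A i) n := by
  classical
  unfold Vap VA
  apply Finset.sum_congr rfl
  intro i hi
  rw [Finset.mem_range] at hi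
  apply Finset.sum_congr rfl
  intro a ha
  rw [Finset.mem_range] at ha
  have := stage_correct hgood hs i hi a ha
  cases hh : aps L i s a
  · rw [hh] at this
    simp only [Bool.false_eq_true, false_iff] at this
    simp [this]
  · rw [hh] at this
    simp only [true_iff] at this
    simp [this]

/-- Main correctness: with the right advice the machine outputs the right digits. -/
lemma G1_correct (n d : ℕ) :
    digits n (∑ i ∈ Finset.range k, VA (A i) n + d) ∈
      G1 L k (Nat.pair n (Nat.pair (mst A k n) d)) := by
  classical
  obtain ⟨s0, hs0⟩ := stage_exists hgood n
  have hcnt0 : mst A k n ≤ cnt L k s0 n := by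
    unfold mst cnt
    apply Finset.sum_le_sum
    intro i hi
    apply Finset.sum_le_sum
    intro a ha
    rw [Finset.mem_range] at hi ha
    by_cases h : a ∈ A i
    · simp [hs0 i hi a ha h, h]
    · simp [h]
  set v := Nat.pair n (Nat.pair (mst A k n) d) with hv
  have hu1 : v.unpair.1 = n := by rw [hv, Nat.unpair_pair]
  have hu2 : v.unpair.2.unpair.1 = mst A k n := by rw [hv, Nat.unpair_pair, Nat.unpair_pair]
  have hu3 : v.unpair.2.unpair.2 = d := by rw [hv, Nat.unpair_pair, Nat.unpair_pair]
  unfold G1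
  rw [Part.mem_map_iff]
  -- the rfind converges
  have hdom : (Nat.rfind (fun s =>
      Part.some (decide (v.unpair.2.unpair.1 ≤ cnt L k s v.unpair.1)))).Dom := by
    apply Nat.rfind_dom.2
    refine ⟨s0, ?_, fun _ => trivial⟩
    rw [hu1, hu2]
    simpa using hcnt0
  obtain ⟨s, hs⟩ := Part.dom_iff_mem.1 hdom
  have hspec := Nat.rfind_spec hs
  simp only [Part.mem_some_iff] at hspec
  rw [hu1, hu2] at hspec
  have hcnt : mst A k n ≤ cnt L k s n := by simpa using hspec.symm
  refine ⟨s, hs, ?_⟩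
  unfold out
  rw [hu1, hu3, Vap_correct hgood hcnt]

end corr







lemma size_mul_le (a b : ℕ) : (a * b).size ≤ a.size + b.size := by
  rcases Nat.eq_zero_or_pos a with rfl | ha
  · simp
  rcases Nat.eq_zero_or_pos b with rfl | hb
  · simp
  rw [Nat.size_le, pow_add]
  exact mul_lt_mul'' (Nat.lt_size_self a) (Nat.lt_size_self b) (Nat.zero_le _) (Nat.zero_le _)

lemma size_pow_le (a e : ℕ) : (a ^ e).size ≤ e * a.size + 1 := by
  induction e with
  | zero => simp
  | succ e ih =>
    calc (a ^ (e + 1)).size = (a * a ^ e).size := by rw [pow_succ, mul_comm]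
      _ ≤ a.size + (a ^ e).size := size_mul_le _ _
      _ ≤ a.size + (e * a.size + 1) := by omega
      _ = (e + 1) * a.size + 1 := by ring

lemma tp (D m : ℕ) : D * (m + 4 * D + 4) + 1 ≤ 2 ^ (m + 4 * D + 3) := by
  induction m with
  | zero =>
    have h1 : 2 * D + 1 < 2 ^ (2 * D + 1) := Nat.lt_two_pow_self
    have h2 : (2 * D + 1) ^ 2 < (2 ^ (2 * D + 1)) ^ 2 :=
      Nat.pow_lt_pow_left h1 (by norm_num)
    have h3 : (2 ^ (2 * D + 1)) ^ 2 = 2 ^ (4 * D + 2) := by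
      rw [← pow_mul]; congr 1; ring
    have h4 : (2:ℕ) ^ (4 * D + 2) ≤ 2 ^ (0 + 4 * D + 3) :=
      Nat.pow_le_pow_right (by norm_num) (by omega)
    nlinarith
  | succ m ih =>
    have hD : D < 2 ^ (m + 4 * D + 3) :=
      lt_of_lt_of_le (Nat.lt_two_pow_self (n := D)) (Nat.pow_le_pow_right (by norm_num) (by omega))
    have : (2:ℕ) ^ (m + 1 + 4 * D + 3) = 2 ^ (m + 4 * D + 3) + 2 ^ (m + 4 * D + 3) := by
      rw [show m + 1 + 4 * D + 3 = (m + 4 * D + 3) + 1 by ring, pow_succ]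
      ring
    have hmul : D * (m + 1 + 4 * D + 4) = D * (m + 4 * D + 4) + D := by ring
    omega

lemma ev1 (D n : ℕ) (hn : 2 ^ (4 * D + 4) ≤ n) : D * Nat.size (n + 1) ≤ n := by
  set s := Nat.size (n + 1) with hs
  have h5 : 4 * D + 5 ≤ s := by
    rw [hs]
    have : 2 ^ (4 * D + 4) ≤ n + 1 := le_trans hn (Nat.le_succ n)
    exact Nat.lt_size.2 this
  have hlow : 2 ^ (s - 1) ≤ n + 1 := Nat.lt_size.1 (by omega)
  have := tp D (s - 4 * D - 4)
  have heq : s - 4 * D - 4 + 4 * D + 4 = s := by omega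
  have heq2 : s - 4 * D - 4 + 4 * D + 3 = s - 1 := by omega
  rw [heq, heq2] at this
  omega

lemma dims_zero (U : List Bool →. List Bool) (hU : OptimalPF U) (x : ℕ → Bool)
    (G : ℕ →. List Bool) (hG : Partrec G) (C : ℕ)
    (hw : ∀ n, ∃ v, pre x n ∈ G v ∧ v ≤ C * (n + 1) ^ 4) :
    eDimInf U x = 0 ∧ eDimSup U x = 0 := by
  obtain ⟨c, hc⟩ := hU.2 (Mach G) (pf_Mach hG)
  set a : ℕ := 2 * Nat.size C + 3 + c with ha
  have hKM : ∀ n, KM U (pre x n) ≤ ((a + 8 * Nat.size (n + 1) : ℕ) : ℕ∞) := by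
    intro n
    obtain ⟨v, hvmem, hvle⟩ := hw n
    have hsize : v.size ≤ C.size + (4 * (n + 1).size + 1) :=
      le_trans (Nat.size_le_size (le_trans hvle le_rfl)) <|
        le_trans (Nat.size_le_size le_rfl) <|
          le_trans (size_mul_le C ((n+1)^4)) (by
            have := size_pow_le (n+1) 4
            omega)
    calc KM U (pre x n) ≤ KM (Mach G) (pre x n) + (c : ℕ∞) := hc _
      _ ≤ ((2 * v.size + 1 : ℕ) : ℕ∞) + (c : ℕ∞) := add_le_add_left (KM_Mach_le hvmem) _
      _ = ((2 * v.size + 1 + c : ℕ) : ℕ∞) := by push_cast; ring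
      _ ≤ ((a + 8 * Nat.size (n + 1) : ℕ) : ℕ∞) := by
          rw [Nat.cast_le]
          omega
  have hsup : eDimSup U x = 0 := by
    by_contra h0
    obtain ⟨c0, hc0⟩ := ENNReal.exists_inv_nat_lt h0
    have hev : ∀ᶠ n in Filter.atTop, (KM U (pre x n) : ℝ≥0∞) / (n : ℝ≥0∞) ≤ (c0 : ℝ≥0∞)⁻¹ := by
      rcases Nat.eq_zero_or_pos c0 with rfl | hc0pos
      · simp
      set D : ℕ := c0 * a + 8 * c0 with hD
      rw [Filter.eventually_atTop]
      refine ⟨2 ^ (4 * D + 4) + 1, fun n hn => ?_⟩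
      have hn1 : 1 ≤ n := le_trans (Nat.succ_le_succ (Nat.zero_le _)) hn
      have hφn : c0 * (a + 8 * Nat.size (n + 1)) ≤ n := by
        have h1 := ev1 D n (le_trans (Nat.le_succ _) hn)
        have hs1 : 1 ≤ Nat.size (n + 1) := by
          rcases Nat.eq_zero_or_pos (Nat.size (n+1)) with h | h
          · rw [Nat.size_eq_zero] at h; omega
          · exact h
        calc c0 * (a + 8 * Nat.size (n + 1)) = c0 * a + 8 * c0 * Nat.size (n + 1) := by ring
          _ ≤ c0 * a * Nat.size (n + 1) + 8 * c0 * Nat.size (n + 1) := by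
              have := Nat.le_mul_of_pos_right (c0 * a) hs1
              omega
          _ = D * Nat.size (n + 1) := by ring
          _ ≤ n := h1
      -- now transfer to ℝ≥0∞
      have hKn : (KM U (pre x n) : ℝ≥0∞) ≤ ((a + 8 * Nat.size (n + 1) : ℕ) : ℝ≥0∞) := by
        have := ENat.toENNReal_le.2 (hKM n)
        rwa [ENat.toENNReal_coe] at this
      have hc0ne : (c0 : ℝ≥0∞) ≠ 0 := Nat.cast_ne_zero.2 (by omega)
      have hc0top : (c0 : ℝ≥0∞) ≠ ⊤ := ENNReal.natCast_ne_top c0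
      have hnne : (n : ℝ≥0∞) ≠ 0 := Nat.cast_ne_zero.2 (by omega)
      have hntop : (n : ℝ≥0∞) ≠ ⊤ := ENNReal.natCast_ne_top n
      apply le_trans (ENNReal.div_le_div_right hKn _)
      rw [ENNReal.div_le_iff hnne hntop]
      have hmul : ((a + 8 * Nat.size (n + 1) : ℕ) : ℝ≥0∞) * (c0 : ℝ≥0∞) ≤ (n : ℝ≥0∞) := by
        rw [← Nat.cast_mul]
        have h9 : (a + 8 * Nat.size (n + 1)) * c0 ≤ n := by
          rw [mul_comm]; exact hφn
        exact_mod_cast h9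
      calc ((a + 8 * Nat.size (n + 1) : ℕ) : ℝ≥0∞)
          = ((a + 8 * Nat.size (n + 1) : ℕ) : ℝ≥0∞) * (c0 : ℝ≥0∞) * (c0 : ℝ≥0∞)⁻¹ := by
            rw [mul_assoc, ENNReal.mul_inv_cancel hc0ne hc0top, mul_one]
        _ ≤ (n : ℝ≥0∞) * (c0 : ℝ≥0∞)⁻¹ := mul_le_mul_left hmul _
        _ = (c0 : ℝ≥0∞)⁻¹ * (n : ℝ≥0∞) := mul_comm _ _
    have hle := Filter.limsup_le_of_le (by isBoundedDefault) hev
    exact absurd hc0 (not_lt.2 hle)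
  refine ⟨?_, hsup⟩
  have hinf_le : eDimInf U x ≤ eDimSup U x := Filter.liminf_le_limsup
  rw [hsup] at hinf_le
  exact le_antisymm hinf_le zero_le






lemma ce_empty : CE (∅ : Set ℕ) := by
  unfold CE
  exact Partrec.none.of_eq fun a => (Part.assert_neg (by simp)).symm

lemma pair_le (a b : ℕ) : Nat.pair a b ≤ (a + b + 1) ^ 2 := by
  unfold Nat.pair
  split <;> nlinarith

/-- Case 2: eventually all ones. -/
lemma case2 (x : ℕ → Bool) (N : ℕ) (hN : ∀ i, N ≤ i → x i = true) :
    ∃ G : ℕ →. List Bool, Partrec G ∧ ∀ n, ∃ v, pre x n ∈ G v ∧ v ≤ 1 * (n + 1) ^ 4 := by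
  set g : ℕ → List Bool := fun v => (List.range v).map fun i => (pre x N).getD i true with hg
  have hcomp : Computable g := by
    apply Primrec.to_comp
    apply Primrec.list_map Primrec.list_range
    exact ((Primrec.list_getD true).comp (Primrec.const (pre x N)) Primrec.snd).to₂
  have hgn : ∀ n, g n = pre x n := by
    intro n
    apply List.ext_getElem
    · simp [hg, pre]
    · intro i h1 h2
      simp only [hg, List.getElem_map, List.getElem_range]
      have hi : i < n := by simpa [hg] using h1
      rw [List.getD_eq_getElem?_getD]
      by_cases hiN : i < N
      · rw [List.getElem?_eq_getElem (by simpa using hiN)]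
        simp [pre]
      · rw [List.getElem?_eq_none (by simpa using le_of_not_gt hiN)]
        simp [pre, hN i (le_of_not_gt hiN)]
  refine ⟨fun v => Part.some (g v), hcomp, fun n => ⟨n, ?_, ?_⟩⟩
  · rw [← hgn n]; exact Part.mem_some _
  · rw [one_mul]
    exact le_trans (Nat.le_succ n) (Nat.le_self_pow (by norm_num) _)

/-- Case 1: infinitely many zeros. -/
lemma case1 (x : ℕ → Bool) (k : ℕ) (A : ℕ → Set ℕ) (hCE : ∀ i, CE (A i))
    (hx : binVal x = ∑ i ∈ Finset.range k, xA (A i))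
    (hcase : ∀ N, ∃ j, N ≤ j ∧ x j = false) :
    ∃ (G : ℕ →. List Bool) (C : ℕ), Partrec G ∧
      ∀ n, ∃ v, pre x n ∈ G v ∧ v ≤ C * (n + 1) ^ 4 := by
  classical
  choose ec hec using fun i => exists_goodCode (hCE i)
  set L : List ℕ := (List.range k).map ec with hL
  have hgood : ∀ i < k, GoodCode (A i) (L.getD i 0) := by
    intro i hi
    have : L.getD i 0 = ec i := by
      rw [hL, List.getD_eq_getElem?_getD, List.getElem?_map, List.getElem?_range hi]
      rfl
    rw [this]
    exact hec i
  refine ⟨G1 L k, ((k + 1) ^ 2 + 1) ^ 2, partrec_G1 L k, fun n => ?_⟩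
  obtain ⟨h1, h2⟩ := claim1 x k A hx hcase n
  set V := ∑ i ∈ Finset.range k, VA (A i) n with hV
  set B := bigval (pre x n) with hB
  set d := B - V with hd
  have hdk : d ≤ k := by omega
  have hVd : V + d = B := by omega
  set m := mst A k n with hm
  refine ⟨Nat.pair n (Nat.pair m d), ?_, ?_⟩
  · have := G1_correct hgood n d
    rw [← hm, ← hV, hVd, hB, digits_pre] at this
    exact this
  · -- size bound
    have hmkn : m ≤ k * n := by
      rw [hm]
      unfold mst
      calc ∑ i ∈ Finset.range k, ∑ a ∈ Finset.range n, (if a ∈ A i then 1 else 0 : ℕ)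
          ≤ ∑ _i ∈ Finset.range k, ∑ _a ∈ Finset.range n, 1 := by
            apply Finset.sum_le_sum
            intro i _
            apply Finset.sum_le_sum
            intro a _
            split <;> omega
        _ = k * n := by simp [mul_comm]
    have hp1 : Nat.pair m d ≤ (m + d + 1) ^ 2 := pair_le m d
    have hp2 : Nat.pair n (Nat.pair m d) ≤ (n + Nat.pair m d + 1) ^ 2 := pair_le _ _
    have hmd : m + d + 1 ≤ (k + 1) * (n + 1) := by nlinarith
    have h3 : Nat.pair m d ≤ (k + 1) ^ 2 * (n + 1) ^ 2 := by
      calc Nat.pair m d ≤ (m + d + 1) ^ 2 := hp1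
        _ ≤ ((k + 1) * (n + 1)) ^ 2 := Nat.pow_le_pow_left hmd 2
        _ = (k + 1) ^ 2 * (n + 1) ^ 2 := by ring
    have h4 : n + Nat.pair m d + 1 ≤ ((k + 1) ^ 2 + 1) * (n + 1) ^ 2 := by
      have h5 : n + 1 ≤ (n + 1) ^ 2 := Nat.le_self_pow (by norm_num) _
      nlinarith
    calc Nat.pair n (Nat.pair m d) ≤ (n + Nat.pair m d + 1) ^ 2 := hp2
      _ ≤ (((k + 1) ^ 2 + 1) * (n + 1) ^ 2) ^ 2 := Nat.pow_le_pow_left h4 2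
      _ = ((k + 1) ^ 2 + 1) ^ 2 * (n + 1) ^ 4 := by ring


/-- the effective Hausdorff dimension and the effective packing
dimension of a regular real are both `0`, i.e. `lim_{n→∞} K(x↾n)/n = 0`. -/
theorem eDim_regular_eq_zero
    (U : List Bool →. List Bool) (hU : OptimalPF U)
    (x : ℕ → Bool) (h : RegularReal (binVal x)) :
    eDimInf U x = 0 ∧ eDimSup U x = 0 := by
  classical
  obtain ⟨k, y, hSLC, hsum⟩ := h
  choose A' hCE' hxA' using hSLC
  set A : ℕ → Set ℕ := fun i => if hi : i < k then A' ⟨i, hi⟩ else ∅ with hA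
  have hCE : ∀ i, CE (A i) := by
    intro i
    rw [hA]
    by_cases hi : i < k
    · simpa [hi] using hCE' ⟨i, hi⟩
    · simpa [hi] using ce_empty
  have hx : binVal x = ∑ i ∈ Finset.range k, xA (A i) := by
    rw [← hsum]
    rw [← Fin.sum_univ_eq_sum_range (fun i => xA (A i)) k]
    apply Finset.sum_congr rfl
    intro i _
    rw [hA]
    simp only [Fin.is_lt, dif_pos]
    rw [hxA' i]
  by_cases hcase : ∀ N, ∃ j, N ≤ j ∧ x j = false
  · obtain ⟨G, C, hG, hw⟩ := case1 x k A hCE hx hcase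
    exact dims_zero U hU x G hG C hw
  · push_neg at hcase
    obtain ⟨N, hN⟩ := hcase
    have hN' : ∀ i, N ≤ i → x i = true := by
      intro i hi
      have := hN i hi
      simpa using this
    obtain ⟨G, hG, hw⟩ := case2 x N hN'
    exact dims_zero U hU x G hG 1 hw


end Paper
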